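/- arXiv:1504.06226 — 4 statements merged into one kernel-verified Lean document; each statement's English description precedes it below -/
import Mathlib

section
/- Let 𝒳 be a finite set, f : 𝒳 → ℝ^p, and for a probability measure ξ on 𝒳 let M(ξ) = Σ_x f(x) f(x)ᵀ ξ(x). Let Ξ⁺ be the set of probability measures μ with M(μ) nonsingular. Then for every ξ ∈ Ξ⁺, det(M(ξ))^(1/p) = min over μ ∈ Ξ⁺ of Σ_x [det(M(μ))^(1/p)/p · f(x)ᵀ M(μ)⁻¹ f(x)] ξ(x), the minimum attained at μ = ξ. -/
/-!
For positive semidefinite `C` of size `p`, AM–GM on the eigenvalues gives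
`det C ^ (1/p) ≤ tr C / p`. Applied to `C = M(μ)^(-1/2) M(ξ) M(μ)^(-1/2)`, whose determinant is
`det M(ξ) / det M(μ)` and whose trace is `tr (M(μ)⁻¹ M(ξ)) = Σ_x f(x)ᵀ M(μ)⁻¹ f(x) ξ(x)`, this is the
minimax inequality; at `μ = ξ` the trace is `tr 1 = p`, which gives equality.
-/

open Matrix

def infoM {X : Type*} [Fintype X] {p : ℕ} (f : X → (Fin p → ℝ)) (ξ : X → ℝ) :
    Matrix (Fin p) (Fin p) ℝ :=
  ∑ x, ξ x • vecMulVec (f x) (f x)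

open scoped MatrixOrder

namespace Matrix

variable {n : Type*} [Fintype n] [DecidableEq n] [Nonempty n]

theorem PosSemidef.det_rpow_le_trace_div_card {C : Matrix n n ℝ} (hC : C.PosSemidef) :
    C.det ^ ((1 : ℝ) / Fintype.card n) ≤ C.trace / Fintype.card n := by
  have h := Real.geom_mean_le_arith_mean Finset.univ (fun _ ↦ 1) hC.1.eigenvalues
    (fun _ _ ↦ zero_le_one) (by simp [Fintype.card_pos]) fun i _ ↦ hC.eigenvalues_nonneg i
  simpa [hC.1.det_eq_prod_eigenvalues, hC.1.trace_eq_sum_eigenvalues] using h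

theorem PosDef.det_rpow_le_mul_trace_inv_mul {A B : Matrix n n ℝ} (hA : A.PosDef)
    (hB : B.PosSemidef) :
    B.det ^ ((1 : ℝ) / Fintype.card n) ≤
      A.det ^ ((1 : ℝ) / Fintype.card n) / Fintype.card n * (A⁻¹ * B).trace := by
  set S := CFC.sqrt A
  have hS : S.PosSemidef := (CFC.sqrt_nonneg A).posSemidef
  have hSS : S * S = A := CFC.sqrt_mul_sqrt_self A hA.posSemidef.nonneg
  have hdetA : 0 < A.det := hA.det_pos
  set C := S⁻¹ * B * S⁻¹
  have hC : C.PosSemidef := by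
    simpa only [hS.1.inv.eq] using hB.mul_mul_conjTranspose_same S⁻¹
  have hdetC : C.det = B.det / A.det := by
    rw [← hSS]
    simp only [C, det_mul, det_nonsing_inv, Ring.inverse_eq_inv']
    field_simp
  have htrC : C.trace = (A⁻¹ * B).trace := by
    rw [trace_mul_comm, ← mul_assoc, ← mul_inv_rev, hSS]
  have h := hC.det_rpow_le_trace_div_card
  rw [hdetC, htrC, Real.div_rpow hB.det_nonneg hdetA.le,
    div_le_iff₀ (Real.rpow_pos_of_pos hdetA _)] at h
  exact h.trans_eq (by ring)

end Matrix

section InformationMatrix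

variable {X : Type*} [Fintype X] {p : ℕ} (f : X → (Fin p → ℝ))

theorem posSemidef_infoM {ν : X → ℝ} (hν : ∀ x, 0 ≤ ν x) : (infoM f ν).PosSemidef :=
  posSemidef_sum _ fun x _ ↦ by simpa using (posSemidef_vecMulVec_self_star (f x)).smul (hν x)

theorem sum_dotProduct_mulVec_mul_eq_trace_mul_infoM (ν : X → ℝ) (W : Matrix (Fin p) (Fin p) ℝ) :
    ∑ x, (f x ⬝ᵥ W *ᵥ f x) * ν x = (W * infoM f ν).trace := by
  simp [infoM, Finset.mul_sum, trace_sum, mul_vecMulVec, dotProduct_comm, mul_comm]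

end InformationMatrix

theorem stmt_6_general {X : Type*} [Fintype X] (p : ℕ) (hp : 0 < p) (f : X → (Fin p → ℝ))
    (ξ : X → ℝ) (hξ0 : ∀ x, 0 ≤ ξ x)
    (hξinv : IsUnit (infoM f ξ).det) :
    (∑ x, ((infoM f ξ).det ^ ((1 : ℝ) / p) / p *
        (f x ⬝ᵥ (infoM f ξ)⁻¹.mulVec (f x))) * ξ x
      = (infoM f ξ).det ^ ((1 : ℝ) / p)) ∧
    (∀ μ : X → ℝ, (∀ x, 0 ≤ μ x) → (∑ x, μ x = 1) → IsUnit (infoM f μ).det →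
      (infoM f ξ).det ^ ((1 : ℝ) / p) ≤
        ∑ x, ((infoM f μ).det ^ ((1 : ℝ) / p) / p *
          (f x ⬝ᵥ (infoM f μ)⁻¹.mulVec (f x))) * ξ x) := by
  have hsum (W : Matrix (Fin p) (Fin p) ℝ) (c : ℝ) :
      ∑ x, c * (f x ⬝ᵥ W *ᵥ f x) * ξ x = c * (W * infoM f ξ).trace := by
    simp_rw [mul_assoc, ← Finset.mul_sum, sum_dotProduct_mulVec_mul_eq_trace_mul_infoM]
  have : Nonempty (Fin p) := ⟨⟨0, hp⟩⟩
  refine ⟨?_, fun μ hμ0 _ hμinv ↦ ?_⟩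
  · rw [hsum, nonsing_inv_mul _ hξinv, trace_one, Fintype.card_fin]
    field_simp
  · have hμ : (infoM f μ).PosDef := (posSemidef_infoM f hμ0).posDef_iff_isUnit.mpr
      ((isUnit_iff_isUnit_det _).mpr hμinv)
    simpa [hsum] using hμ.det_rpow_le_mul_trace_inv_mul (posSemidef_infoM f hξ0)

/-- Minimax representation of the homogeneous D-optimality criterion:
`det(M(ξ))^(1/p) = min_{μ∈Ξ⁺} Σ_x [det(M(μ))^(1/p)/p · f(x)ᵀM(μ)⁻¹f(x)] ξ(x)`,
the minimum being attained at `μ = ξ`. -/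
theorem stmt_6 {X : Type*} [Fintype X] (p : ℕ) (hp : 0 < p) (f : X → (Fin p → ℝ))
    (ξ : X → ℝ) (hξ0 : ∀ x, 0 ≤ ξ x) (hξ1 : ∑ x, ξ x = 1)
    (hξinv : IsUnit (infoM f ξ).det) :
    (∑ x, ((infoM f ξ).det ^ ((1 : ℝ) / p) / p *
        (f x ⬝ᵥ (infoM f ξ)⁻¹.mulVec (f x))) * ξ x
      = (infoM f ξ).det ^ ((1 : ℝ) / p)) ∧
    (∀ μ : X → ℝ, (∀ x, 0 ≤ μ x) → (∑ x, μ x = 1) → IsUnit (infoM f μ).det →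
      (infoM f ξ).det ^ ((1 : ℝ) / p) ≤
        ∑ x, ((infoM f μ).det ^ ((1 : ℝ) / p) / p *
          (f x ⬝ᵥ (infoM f μ)⁻¹.mulVec (f x))) * ξ x) :=
  stmt_6_general p hp f ξ hξ0 hξinv
end

section
/- Let 𝒳 be а finite set, f : 𝒳 → ℝ^p, M(ξ) = Σ_x f(x)f(x)ᵀ ξ(x), and Ξ⁺ the set of probability measures ξ on 𝒳 with M(ξ) nonsingular. Then for every ξ ∈ Ξ⁺, 1/tr(M(ξ)⁻¹) = min over μ ∈ Ξ⁺ of Σ_x [‖M(μ)⁻¹ f(x)‖² / (tr M(μ)⁻¹)²] ξ(x), with the minimum attained at μ = ξ. -/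
/-! For any matrix `B`, `∑ₓ ξ(x) ‖B f(x)‖² = tr(B M(ξ) Bᵀ)`. At `B = M(ξ)⁻¹` this equals
`tr M(ξ)⁻¹`, which gives the value at `μ = ξ`. For `B = M(μ)⁻¹` the bound is Cauchy–Schwarz for the
semi-inner product `⟨A, C⟩ = tr(A M(ξ) Cᵀ)`: since `⟨B, M(ξ)⁻¹⟩ = tr B` and
`⟨M(ξ)⁻¹, M(ξ)⁻¹⟩ = tr M(ξ)⁻¹`, we get `(tr B)² ≤ tr M(ξ)⁻¹ · tr(B M(ξ) Bᵀ)`. -/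

open Matrix

namespace Matrix

variable {n : Type*} [Fintype n] [DecidableEq n]

theorem PosSemidef.trace_inv_pos [Nonempty n] {N : Matrix n n ℝ} (hN : N.PosSemidef)
    (hNu : IsUnit N.det) : 0 < N⁻¹.trace :=
  (hN.posDef_iff_isUnit.mpr ((isUnit_iff_isUnit_det N).mpr hNu)).inv.trace_pos

theorem PosSemidef.sq_trace_le_trace_inv_mul_trace {N : Matrix n n ℝ} (hN : N.PosSemidef)
    (hNu : IsUnit N.det) (A : Matrix n n ℝ) :
    A.trace ^ 2 ≤ N⁻¹.trace * (A * N * Aᵀ).trace := by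
  have hNT : Nᵀ = N := by simpa [conjTranspose_eq_transpose_of_trivial] using hN.isHermitian.eq
  have hNinvT : N⁻¹ᵀ = N⁻¹ := by rw [transpose_nonsing_inv, hNT]
  have hquad : ∀ t : ℝ, 0 ≤ N⁻¹.trace * (t * t) + (-2 * A.trace) * t + (A * N * Aᵀ).trace := by
    intro t
    have hpsd := hN.mul_mul_conjTranspose_same (A - t • N⁻¹)
    rw [conjTranspose_eq_transpose_of_trivial] at hpsd
    have hexpand : (A - t • N⁻¹) * N * (A - t • N⁻¹)ᵀ
        = A * N * Aᵀ - t • (A * (N * N⁻¹)) - t • ((N⁻¹ * N) * Aᵀ)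
          + (t * t) • ((N⁻¹ * N) * N⁻¹) := by
      simp only [transpose_sub, transpose_smul, hNinvT, Matrix.sub_mul, Matrix.mul_sub,
        Matrix.smul_mul, Matrix.mul_smul, Matrix.mul_assoc]
      module
    have htrace := hpsd.trace_nonneg
    rw [hexpand, mul_nonsing_inv N hNu, nonsing_inv_mul N hNu] at htrace
    simp only [Matrix.mul_one, Matrix.one_mul, trace_add, trace_sub, trace_smul, trace_transpose,
      smul_eq_mul] at htrace
    linarith
  have := discrim_le_zero hquad
  rw [discrim] at this
  linarith

end Matrix

section InformationMatrix

variable {X : Type*} [Fintype X] {p : ℕ}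

theorem infoM_posSemidef (f : X → (Fin p → ℝ)) {ξ : X → ℝ} (hξ0 : ∀ x, 0 ≤ ξ x) :
    (infoM f ξ).PosSemidef :=
  posSemidef_sum _ fun x _ => by
    simpa using (posSemidef_vecMulVec_self_star (f x)).smul (hξ0 x)

theorem trace_mul_infoM_mul_transpose (f : X → (Fin p → ℝ)) (ξ : X → ℝ)
    (B : Matrix (Fin p) (Fin p) ℝ) :
    (B * infoM f ξ * Bᵀ).trace = ∑ x, ξ x * ((B *ᵥ f x) ⬝ᵥ (B *ᵥ f x)) := by
  simp only [infoM, Finset.mul_sum, Finset.sum_mul, Matrix.mul_smul, Matrix.smul_mul, trace_sum,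
    trace_smul, mul_vecMulVec, vecMulVec_mul, vecMul_transpose, trace_vecMulVec, smul_eq_mul]

theorem sum_mulVec_dotProduct_div_sq_trace_mul (f : X → (Fin p → ℝ)) (ξ : X → ℝ)
    (B : Matrix (Fin p) (Fin p) ℝ) :
    ∑ x, ((B *ᵥ f x) ⬝ᵥ (B *ᵥ f x) / B.trace ^ 2) * ξ x
      = (B * infoM f ξ * Bᵀ).trace / B.trace ^ 2 := by
  rw [trace_mul_infoM_mul_transpose, Finset.sum_div]
  exact Finset.sum_congr rfl fun x _ => by ring

end InformationMatrix

theorem stmt_7_general {X : Type*} [Fintype X] (p : ℕ) (hp : 0 < p) (f : X → (Fin p → ℝ))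
    (ξ : X → ℝ) (hξ0 : ∀ x, 0 ≤ ξ x)
    (hξinv : IsUnit (infoM f ξ).det) :
    (∑ x, ((infoM f ξ)⁻¹.mulVec (f x) ⬝ᵥ (infoM f ξ)⁻¹.mulVec (f x) /
        ((infoM f ξ)⁻¹.trace) ^ 2) * ξ x
      = 1 / (infoM f ξ)⁻¹.trace) ∧
    (∀ μ : X → ℝ, (∀ x, 0 ≤ μ x) → (∑ x, μ x = 1) → IsUnit (infoM f μ).det →
      1 / (infoM f ξ)⁻¹.trace ≤
        ∑ x, ((infoM f μ)⁻¹.mulVec (f x) ⬝ᵥ (infoM f μ)⁻¹.mulVec (f x) /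
          ((infoM f μ)⁻¹.trace) ^ 2) * ξ x) := by
  have : Nonempty (Fin p) := ⟨⟨0, hp⟩⟩
  have hN := infoM_posSemidef f hξ0
  have htrN := hN.trace_inv_pos hξinv
  refine ⟨?_, fun μ hμ0 _ hμinv => ?_⟩
  · rw [sum_mulVec_dotProduct_div_sq_trace_mul, nonsing_inv_mul _ hξinv, Matrix.one_mul,
      trace_transpose, sq, div_mul_cancel_left₀ htrN.ne', one_div]
  · have htrM := (infoM_posSemidef f hμ0).trace_inv_pos hμinv
    rw [sum_mulVec_dotProduct_div_sq_trace_mul, div_le_div_iff₀ htrN (by positivity)]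
    linarith [hN.sq_trace_le_trace_inv_mul_trace hξinv (infoM f μ)⁻¹]

/-- Minimax representation of the homogeneous A-optimality criterion:
`1/tr(M(ξ)⁻¹) = min_{μ∈Ξ⁺} Σ_x [‖M(μ)⁻¹f(x)‖²/(tr M(μ)⁻¹)²] ξ(x)`,
the minimum being attained at `μ = ξ`. -/
theorem stmt_7 {X : Type*} [Fintype X] (p : ℕ) (hp : 0 < p) (f : X → (Fin p → ℝ))
    (ξ : X → ℝ) (hξ0 : ∀ x, 0 ≤ ξ x) (hξ1 : ∑ x, ξ x = 1)
    (hξinv : IsUnit (infoM f ξ).det) :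
    (∑ x, ((infoM f ξ)⁻¹.mulVec (f x) ⬝ᵥ (infoM f ξ)⁻¹.mulVec (f x) /
        ((infoM f ξ)⁻¹.trace) ^ 2) * ξ x
      = 1 / (infoM f ξ)⁻¹.trace) ∧
    (∀ μ : X → ℝ, (∀ x, 0 ≤ μ x) → (∑ x, μ x = 1) → IsUnit (infoM f μ).det →
      1 / (infoM f ξ)⁻¹.trace ≤
        ∑ x, ((infoM f μ)⁻¹.mulVec (f x) ⬝ᵥ (infoM f μ)⁻¹.mulVec (f x) /
          ((infoM f μ)⁻¹.trace) ^ 2) * ξ x) :=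
  stmt_7_general p hp f ξ hξ0 hξinv
end

section
/- Let 𝒳 be a finite set, f : 𝒳 → ℝ^p, M(ξ) = Σ_x f(x)f(x)ᵀ ξ(x), and for μ a probability measure on 𝒳 let P^(k)(μ) be the orthogonal projector onto the span of k orthonormal eigenvectors of M(μ) corresponding to its k smallest eigenvalues. Then for every probability measure ξ, the sum of the k smallest eigenvalues of M(ξ) equals min over all probability measures μ of Σ_x ‖P^(k)(μ) f(x)‖² ξ(x), with the minimum attained at μ = ξ. -/
open Matrix

/-- The projector onto the span of the first `k` of the vectors `u`. -/
def projK {p : ℕ} (k : ℕ) (u : Fin p → (Fin p → ℝ)) : Matrix (Fin p) (Fin p) ℝ :=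
  ∑ j ∈ Finset.univ.filter (fun j : Fin p => (j : ℕ) < k), vecMulVec (u j) (u j)

/-!
In an orthonormal eigenbasis `u` of `M(ξ)`, the quantity `Σ_x ‖P f(x)‖² ξ(x)` for the projector `P`
onto the span of orthonormal vectors `w_1, …, w_k` equals `Σ_i w_iᵀ M(ξ) w_i = Σ_j λ_j t_j` with
`t_j = Σ_i (w_i ⬝ u_j)²`. Parseval gives `0 ≤ t_j ≤ 1` and `Σ_j t_j = min k p`, and among such weights
`Σ_j λ_j t_j` is smallest when all the weight sits on the smallest eigenvalues (Ky Fan).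
For `w = u` the weights are exactly those, which gives equality at `μ = ξ`.
-/

open Finset

section Orthonormal

variable {n : Type*} [Fintype n] [DecidableEq n]

theorem sum_dotProduct_mul_dotProduct_of_orthonormal {w : n → n → ℝ}
    (hw : ∀ i j, w i ⬝ᵥ w j = if i = j then (1 : ℝ) else 0) (v v' : n → ℝ) :
    ∑ j, (w j ⬝ᵥ v) * (w j ⬝ᵥ v') = v ⬝ᵥ v' := by
  set U : Matrix n n ℝ := Matrix.of w
  have hUUt : U * Uᵀ = 1 := by
    ext i j
    simpa [U, mul_apply, one_apply, dotProduct] using hw i j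
  -- a square matrix with orthonormal rows also has orthonormal columns
  have hUtU : Uᵀ * U = 1 := mul_eq_one_comm.mp hUUt
  calc ∑ j, (w j ⬝ᵥ v) * (w j ⬝ᵥ v') = (U *ᵥ v) ⬝ᵥ (U *ᵥ v') := rfl
    _ = v ⬝ᵥ v' := by
      rw [dotProduct_mulVec, ← vecMul_transpose, vecMul_vecMul, hUtU, vecMul_one]

theorem sum_sq_dotProduct_of_orthonormal {w : n → n → ℝ}
    (hw : ∀ i j, w i ⬝ᵥ w j = if i = j then (1 : ℝ) else 0) (v : n → ℝ) :
    ∑ j, (w j ⬝ᵥ v) ^ 2 = v ⬝ᵥ v := by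
  simp only [sq, sum_dotProduct_mul_dotProduct_of_orthonormal hw]

theorem dotProduct_mulVec_eq_sum_eigenvalues {A : Matrix n n ℝ} (hA : A.IsSymm)
    {lam : n → ℝ} {u : n → n → ℝ}
    (hu : ∀ i j, u i ⬝ᵥ u j = if i = j then (1 : ℝ) else 0)
    (heig : ∀ i, A *ᵥ u i = lam i • u i) (v : n → ℝ) :
    v ⬝ᵥ A *ᵥ v = ∑ j, lam j * (u j ⬝ᵥ v) ^ 2 := by
  have hcoord : ∀ j, u j ⬝ᵥ A *ᵥ v = lam j * (u j ⬝ᵥ v) := fun j => by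
    rw [dotProduct_mulVec, ← mulVec_transpose, hA.eq, heig, smul_dotProduct, smul_eq_mul]
  rw [← sum_dotProduct_mul_dotProduct_of_orthonormal hu]
  exact sum_congr rfl fun j _ => by rw [hcoord]; ring

end Orthonormal

theorem sum_le_sum_mul_of_threshold {ι : Type*} [Fintype ι] {S : Finset ι} {lam t : ι → ℝ}
    {c : ℝ} (hlow : ∀ j ∈ S, lam j ≤ c) (hhigh : ∀ j ∉ S, c ≤ lam j)
    (ht0 : ∀ j, 0 ≤ t j) (ht1 : ∀ j, t j ≤ 1) (hsum : ∑ j, t j = #S) :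
    ∑ j ∈ S, lam j ≤ ∑ j, lam j * t j := by
  classical
  -- each term `(lam j - c) * (t j - 𝟙_S j)` is a product of two numbers of the same sign
  have hterm : ∀ j, 0 ≤ (lam j - c) * (t j - if j ∈ S then 1 else 0) := fun j => by
    by_cases hj : j ∈ S
    · rw [if_pos hj]
      exact mul_nonneg_of_nonpos_of_nonpos (by linarith [hlow j hj]) (by linarith [ht1 j])
    · rw [if_neg hj, sub_zero]
      exact mul_nonneg (by linarith [hhigh j hj]) (ht0 j)
  have hexpand : ∑ j, (lam j - c) * (t j - if j ∈ S then 1 else 0)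
      = ∑ j, lam j * t j - ∑ j ∈ S, lam j - c * ∑ j, t j + c * #S := by
    simp only [mul_sub, sub_mul, sum_sub_distrib, mul_ite, mul_one, mul_zero, sum_ite_mem_eq,
      ← mul_sum, sum_const, nsmul_eq_mul]
    ring
  rw [hsum] at hexpand
  linarith [sum_nonneg fun j (_ : j ∈ univ) => hterm j]

theorem exists_threshold_of_monotone {p : ℕ} {lam : Fin p → ℝ} (hlam : Monotone lam) (k : ℕ) :
    ∃ c, (∀ j : Fin p, (j : ℕ) < k → lam j ≤ c) ∧ (∀ j : Fin p, ¬ (j : ℕ) < k → c ≤ lam j) := by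
  rcases Nat.eq_zero_or_pos p with rfl | hp
  · exact ⟨0, fun j => j.elim0, fun j => j.elim0⟩
  refine ⟨lam ⟨min k p - 1, by omega⟩, fun j hj => hlam ?_, fun j hj => hlam ?_⟩ <;>
    simp only [Fin.le_def] <;> omega

theorem sum_eigenvalues_le_sum_dotProduct_mulVec {p : ℕ} {A : Matrix (Fin p) (Fin p) ℝ}
    (hA : A.IsSymm) {lam : Fin p → ℝ} (hlam : Monotone lam) {u w : Fin p → Fin p → ℝ}
    (hu : ∀ i j, u i ⬝ᵥ u j = if i = j then (1 : ℝ) else 0)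
    (heig : ∀ i, A *ᵥ u i = lam i • u i)
    (hw : ∀ i j, w i ⬝ᵥ w j = if i = j then (1 : ℝ) else 0) (k : ℕ) :
    ∑ i ∈ univ.filter (fun i : Fin p => (i : ℕ) < k), lam i
      ≤ ∑ i ∈ univ.filter (fun i : Fin p => (i : ℕ) < k), w i ⬝ᵥ A *ᵥ w i := by
  set S := univ.filter (fun i : Fin p => (i : ℕ) < k)
  -- `t j` is the squared length of the projection of `u j` onto the span of the `w i`, `i ∈ S`
  set t : Fin p → ℝ := fun j => ∑ i ∈ S, (w i ⬝ᵥ u j) ^ 2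
  have hrhs : ∑ i ∈ S, w i ⬝ᵥ A *ᵥ w i = ∑ j, lam j * t j := by
    simp only [dotProduct_mulVec_eq_sum_eigenvalues hA hu heig, t, mul_sum, dotProduct_comm (u _)]
    exact sum_comm
  have ht1 : ∀ j, t j ≤ 1 := fun j => calc
    t j ≤ ∑ i, (w i ⬝ᵥ u j) ^ 2 :=
      sum_le_sum_of_subset_of_nonneg (subset_univ S) fun i _ _ => sq_nonneg _
    _ = 1 := by rw [sum_sq_dotProduct_of_orthonormal hw, hu, if_pos rfl]
  have hsum : ∑ j, t j = #S := by
    simp only [t, dotProduct_comm (w _)]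
    rw [sum_comm]
    simp only [sum_sq_dotProduct_of_orthonormal hu, hw, if_pos, sum_const, nsmul_one]
  obtain ⟨c, hlow, hhigh⟩ := exists_threshold_of_monotone hlam k
  rw [hrhs]
  exact sum_le_sum_mul_of_threshold (fun j hj => hlow j (mem_filter.mp hj).2)
    (fun j hj => hhigh j fun h => hj (mem_filter.mpr ⟨mem_univ j, h⟩))
    (fun j => sum_nonneg fun i _ => sq_nonneg _) ht1 hsum

section Design

variable {X : Type*} [Fintype X] {p : ℕ}

theorem infoM_isSymm (f : X → Fin p → ℝ) (ν : X → ℝ) : (infoM f ν).IsSymm := by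
  ext i j
  simp only [infoM, transpose_apply, Matrix.sum_apply, Matrix.smul_apply, vecMulVec_apply, mul_comm]

theorem dotProduct_infoM_mulVec (f : X → Fin p → ℝ) (ν : X → ℝ) (v : Fin p → ℝ) :
    v ⬝ᵥ infoM f ν *ᵥ v = ∑ x, ν x * (f x ⬝ᵥ v) ^ 2 := by
  simp only [infoM, sum_mulVec, smul_mulVec, vecMulVec_mulVec, op_smul_eq_smul, dotProduct_sum,
    dotProduct_smul, smul_eq_mul, dotProduct_comm v (f _), sq]

theorem projK_mulVec (k : ℕ) (w : Fin p → Fin p → ℝ) (g : Fin p → ℝ) :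
    projK k w *ᵥ g = ∑ j ∈ univ.filter (fun j : Fin p => (j : ℕ) < k), (w j ⬝ᵥ g) • w j := by
  simp only [projK, sum_mulVec, vecMulVec_mulVec, op_smul_eq_smul]

theorem projK_mulVec_dotProduct_self (k : ℕ) {w : Fin p → Fin p → ℝ}
    (hw : ∀ i j, w i ⬝ᵥ w j = if i = j then (1 : ℝ) else 0) (g : Fin p → ℝ) :
    projK k w *ᵥ g ⬝ᵥ projK k w *ᵥ g
      = ∑ i ∈ univ.filter (fun i : Fin p => (i : ℕ) < k), (w i ⬝ᵥ g) ^ 2 := by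
  rw [projK_mulVec, sum_dotProduct]
  refine sum_congr rfl fun i hi => ?_
  simp only [smul_dotProduct, dotProduct_sum, dotProduct_smul, hw, smul_eq_mul, mul_ite, mul_one,
    mul_zero, sum_ite_eq, if_pos hi, sq]

theorem sum_projK_mulVec_sq_mul_eq (f : X → Fin p → ℝ) (ξ : X → ℝ) (k : ℕ)
    {w : Fin p → Fin p → ℝ} (hw : ∀ i j, w i ⬝ᵥ w j = if i = j then (1 : ℝ) else 0) :
    ∑ x, (projK k w *ᵥ f x ⬝ᵥ projK k w *ᵥ f x) * ξ x
      = ∑ i ∈ univ.filter (fun i : Fin p => (i : ℕ) < k), w i ⬝ᵥ infoM f ξ *ᵥ w i := by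
  simp only [projK_mulVec_dotProduct_self k hw, dotProduct_infoM_mulVec, sum_mul]
  rw [sum_comm]
  exact sum_congr rfl fun i _ => sum_congr rfl fun x _ => by rw [dotProduct_comm]; ring

end Design

theorem stmt_8_general {X : Type*} [Fintype X] (p k : ℕ) (f : X → (Fin p → ℝ))
    (ξ : X → ℝ)
    (lam : Fin p → ℝ) (u : Fin p → (Fin p → ℝ))
    (hmono : Monotone lam)
    (horth : ∀ i j, u i ⬝ᵥ u j = if i = j then (1 : ℝ) else 0)
    (heig : ∀ i, (infoM f ξ).mulVec (u i) = lam i • u i) :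
    (∑ x, ((projK k u).mulVec (f x) ⬝ᵥ (projK k u).mulVec (f x)) * ξ x
      = ∑ i ∈ Finset.univ.filter (fun i : Fin p => (i : ℕ) < k), lam i) ∧
    (∀ μ : X → ℝ, (∀ x, 0 ≤ μ x) → (∑ x, μ x = 1) →
      ∀ lamμ : Fin p → ℝ, ∀ uμ : Fin p → (Fin p → ℝ),
        Monotone lamμ →
        (∀ i j, uμ i ⬝ᵥ uμ j = if i = j then (1 : ℝ) else 0) →
        (∀ i, (infoM f μ).mulVec (uμ i) = lamμ i • uμ i) →
        (∑ i ∈ Finset.univ.filter (fun i : Fin p => (i : ℕ) < k), lam i) ≤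
          ∑ x, ((projK k uμ).mulVec (f x) ⬝ᵥ (projK k uμ).mulVec (f x)) * ξ x) := by
  refine ⟨?_, fun μ _ _ _ uμ _ horthμ _ => ?_⟩
  · rw [sum_projK_mulVec_sq_mul_eq f ξ k horth]
    refine sum_congr rfl fun i _ => ?_
    rw [heig, dotProduct_smul, horth, if_pos rfl, smul_eq_mul, mul_one]
  · rw [sum_projK_mulVec_sq_mul_eq f ξ k horthμ]
    exact sum_eigenvalues_le_sum_dotProduct_mulVec (infoM_isSymm f ξ) hmono horth heig horthμ k

/-- Minimax representation of the `E_k`-optimality criterion: the sum of the `k` smallest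
eigenvalues of `M(ξ)` equals `min_μ Σ_x ‖P^(k)(μ) f(x)‖² ξ(x)`, the minimum being attained
at `μ = ξ`. Eigen-data (increasingly ordered eigenvalues with orthonormal eigenvectors)
are supplied explicitly for each design. -/
theorem stmt_8 {X : Type*} [Fintype X] (p k : ℕ) (hk : k ≤ p) (f : X → (Fin p → ℝ))
    (ξ : X → ℝ) (hξ0 : ∀ x, 0 ≤ ξ x) (hξ1 : ∑ x, ξ x = 1)
    (lam : Fin p → ℝ) (u : Fin p → (Fin p → ℝ))
    (hmono : Monotone lam)
    (horth : ∀ i j, u i ⬝ᵥ u j = if i = j then (1 : ℝ) else 0)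
    (heig : ∀ i, (infoM f ξ).mulVec (u i) = lam i • u i) :
    (∑ x, ((projK k u).mulVec (f x) ⬝ᵥ (projK k u).mulVec (f x)) * ξ x
      = ∑ i ∈ Finset.univ.filter (fun i : Fin p => (i : ℕ) < k), lam i) ∧
    (∀ μ : X → ℝ, (∀ x, 0 ≤ μ x) → (∑ x, μ x = 1) →
      ∀ lamμ : Fin p → ℝ, ∀ uμ : Fin p → (Fin p → ℝ),
        Monotone lamμ →
        (∀ i j, uμ i ⬝ᵥ uμ j = if i = j then (1 : ℝ) else 0) →
        (∀ i, (infoM f μ).mulVec (uμ i) = lamμ i • uμ i) →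
        (∑ i ∈ Finset.univ.filter (fun i : Fin p => (i : ℕ) < k), lam i) ≤
          ∑ x, ((projK k uμ).mulVec (f x) ⬝ᵥ (projK k uμ).mulVec (f x)) * ξ x) :=
  stmt_8_general p k f ξ lam u hmono horth heig
end

section
/- In the linear model η(x,θ) = f(x)ᵀθ on a finite set 𝒳, for any probability measure ξ with M(ξ) = Σ_x f(x)f(x)ᵀξ(x) invertible and any θ⁽⁰⁾ ∈ ℝ^p, the sum of the k smallest eigenvalues of M(ξ) equals the minimum over all tuples (θ⁽¹⁾,…,θ⁽ᵖ⁾) with nonzero pairwise orthogonal differences θ⁽ⁱ⁾−θ⁽⁰⁾ of Σ_{i=1}^k ‖η(·,θ⁽ⁱ⁾) − η(·,θ⁽⁰⁾)‖²_ξ / ‖θ⁽ⁱ⁾ − θ⁽⁰⁾‖², where ‖g‖²_ξ = Σ_x g(x)² ξ(x). -/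
open Matrix

-- helper: orthonormal rows imply orthonormal columns
lemma rows_to_cols {p : ℕ} (e : Fin p → Fin p → ℝ)
    (h : ∀ i j, e i ⬝ᵥ e j = if i = j then (1:ℝ) else 0) :
    ∀ a b, ∑ i, e i a * e i b = if a = b then (1:ℝ) else 0 := by
  intro a b
  let U : Matrix (Fin p) (Fin p) ℝ := Matrix.of e
  have h1 : U * Uᵀ = 1 := by
    ext i j
    simpa [U, Matrix.mul_apply, Matrix.one_apply, dotProduct] using h i j
  have h2 : Uᵀ * U = 1 := mul_eq_one_comm.mp h1
  have := congrFun (congrFun h2 a) b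
  simpa [U, Matrix.mul_apply, Matrix.one_apply] using this

-- Parseval
lemma parseval {p : ℕ} (u : Fin p → Fin p → ℝ)
    (h : ∀ i j, u i ⬝ᵥ u j = if i = j then (1:ℝ) else 0) (v w : Fin p → ℝ) :
    v ⬝ᵥ w = ∑ j, (u j ⬝ᵥ v) * (u j ⬝ᵥ w) := by
  have hc := rows_to_cols u h
  calc v ⬝ᵥ w = ∑ a, ∑ b, v a * w b * (if a = b then (1:ℝ) else 0) := by
        simp [dotProduct, mul_ite]
    _ = ∑ a, ∑ b, v a * w b * ∑ j, u j a * u j b := by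
        refine Finset.sum_congr rfl fun a _ => Finset.sum_congr rfl fun b _ => by rw [hc a b]
    _ = ∑ a, ∑ j, ∑ b, v a * w b * (u j a * u j b) := by
        refine Finset.sum_congr rfl fun a _ => ?_
        rw [Finset.sum_comm]
        exact Finset.sum_congr rfl fun j _ => by rw [Finset.mul_sum]
    _ = ∑ j, ∑ a, ∑ b, v a * w b * (u j a * u j b) := Finset.sum_comm
    _ = ∑ j, (u j ⬝ᵥ v) * (u j ⬝ᵥ w) := by
        refine Finset.sum_congr rfl fun j _ => ?_
        rw [dotProduct, dotProduct, Finset.sum_mul_sum]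
        exact Finset.sum_congr rfl fun a _ => Finset.sum_congr rfl fun b _ => by ring


lemma quadM {X : Type*} [Fintype X] {p : ℕ} (f : X → (Fin p → ℝ)) (ξ : X → ℝ)
    (v w : Fin p → ℝ) :
    v ⬝ᵥ (infoM f ξ).mulVec w = ∑ x, (f x ⬝ᵥ v) * (f x ⬝ᵥ w) * ξ x := by
  have hM : (infoM f ξ).mulVec w = fun a => ∑ x, ξ x * (f x ⬝ᵥ w) * f x a := by
    funext a
    simp only [infoM, Matrix.mulVec, dotProduct, Matrix.sum_apply, Matrix.smul_apply,
      vecMulVec_apply, smul_eq_mul, Finset.sum_mul]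
    rw [Finset.sum_comm]
    refine Finset.sum_congr rfl fun x _ => ?_
    conv_rhs => rw [Finset.mul_sum, Finset.sum_mul]
    exact Finset.sum_congr rfl fun b _ => by ring
  rw [hM]
  rw [dotProduct]
  simp only [Finset.mul_sum]
  rw [Finset.sum_comm]
  refine Finset.sum_congr rfl fun x _ => ?_
  conv_rhs => rw [dotProduct, Finset.sum_mul, Finset.sum_mul]
  exact Finset.sum_congr rfl fun a _ => by ring

lemma infoM_symm {X : Type*} [Fintype X] {p : ℕ} (f : X → (Fin p → ℝ)) (ξ : X → ℝ) :
    (infoM f ξ)ᵀ = infoM f ξ := by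
  rw [infoM, Matrix.transpose_sum]
  refine Finset.sum_congr rfl fun x _ => ?_
  rw [Matrix.transpose_smul]
  congr 1
  ext a b
  simp [vecMulVec, mul_comm]

lemma hcard_aux (p k : ℕ) (hk : k ≤ p) :
    (Finset.univ.filter (fun i : Fin p => (i : ℕ) < k)).card = k := by
  rw [Finset.card_filter, Fin.sum_univ_eq_sum_range (fun i => if i < k then 1 else 0)]
  have h : (Finset.range p).filter (fun i => i < k) = Finset.range k := by
    ext x; simp only [Finset.mem_filter, Finset.mem_range]; omega
  rw [← Finset.sum_filter, h, Finset.sum_const, Finset.card_range, smul_eq_mul, mul_one]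


/-- Extended `E_k` criterion in the linear model `η(x,θ) = f(x)ᵀθ`: the sum of the `k`
smallest eigenvalues of `M(ξ)` is the minimum over tuples `(θ⁽¹⁾,…,θ⁽ᵖ⁾)` with nonzero
pairwise orthogonal differences `θ⁽ⁱ⁾−θ⁽⁰⁾` of
`Σ_{i≤k} ‖η(·,θ⁽ⁱ⁾)−η(·,θ⁽⁰⁾)‖²_ξ / ‖θ⁽ⁱ⁾−θ⁽⁰⁾‖²`. -/
theorem stmt_16 {X : Type*} [Fintype X] (p k : ℕ) (hp : 0 < p) (hk : k ≤ p)
    (f : X → (Fin p → ℝ))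
    (ξ : X → ℝ) (hξ0 : ∀ x, 0 ≤ ξ x) (hξ1 : ∑ x, ξ x = 1)
    (hξinv : IsUnit (infoM f ξ).det)
    (lam : Fin p → ℝ) (u : Fin p → (Fin p → ℝ))
    (hmono : Monotone lam)
    (horth : ∀ i j, u i ⬝ᵥ u j = if i = j then (1 : ℝ) else 0)
    (heig : ∀ i, (infoM f ξ).mulVec (u i) = lam i • u i)
    (θ0 : Fin p → ℝ) :
    IsLeast {t : ℝ | ∃ θ : Fin p → (Fin p → ℝ),
        (∀ i, θ i - θ0 ≠ 0) ∧
        (∀ i j, i ≠ j → (θ i - θ0) ⬝ᵥ (θ j - θ0) = 0) ∧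
        t = ∑ i ∈ Finset.univ.filter (fun i : Fin p => (i : ℕ) < k),
          (∑ x, ((f x ⬝ᵥ θ i) - (f x ⬝ᵥ θ0)) ^ 2 * ξ x) /
            ((θ i - θ0) ⬝ᵥ (θ i - θ0))}
      (∑ i ∈ Finset.univ.filter (fun i : Fin p => (i : ℕ) < k), lam i) := by
  set S := Finset.univ.filter (fun i : Fin p => (i : ℕ) < k) with hS
  -- spectral representation of the quadratic form
  have h3 : ∀ j z, u j ⬝ᵥ (infoM f ξ).mulVec z = lam j * (u j ⬝ᵥ z) := by
    intro j z
    rw [Matrix.dotProduct_mulVec]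
    have hv : (u j) ᵥ* (infoM f ξ) = (infoM f ξ).mulVec (u j) := by
      conv_lhs => rw [← infoM_symm f ξ]
      rw [Matrix.vecMul_transpose]
    rw [hv, heig j, smul_dotProduct, smul_eq_mul]
  have hspec : ∀ z : Fin p → ℝ, ∑ x, (f x ⬝ᵥ z) ^ 2 * ξ x = ∑ j, lam j * (u j ⬝ᵥ z) ^ 2 := by
    intro z
    calc ∑ x, (f x ⬝ᵥ z) ^ 2 * ξ x = ∑ x, (f x ⬝ᵥ z) * (f x ⬝ᵥ z) * ξ x := by
          refine Finset.sum_congr rfl fun x _ => by ring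
      _ = z ⬝ᵥ (infoM f ξ).mulVec z := (quadM f ξ z z).symm
      _ = ∑ j, (u j ⬝ᵥ z) * (u j ⬝ᵥ (infoM f ξ).mulVec z) := parseval u horth _ _
      _ = ∑ j, lam j * (u j ⬝ᵥ z) ^ 2 := by
          refine Finset.sum_congr rfl fun j _ => ?_
          rw [h3 j z]; ring
  constructor
  · -- membership: θ i = θ0 + u i
    refine ⟨fun i => θ0 + u i, ?_, ?_, ?_⟩
    · intro i h
      have h2 := horth i i
      simp only [add_sub_cancel_left] at h
      rw [h] at h2
      simp at h2
    · intro i j hij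
      simp only [add_sub_cancel_left]
      simpa [hij] using horth i j
    · refine (Finset.sum_congr rfl fun i _ => ?_).symm
      have h1 : ∀ x : X, f x ⬝ᵥ (θ0 + u i) - f x ⬝ᵥ θ0 = f x ⬝ᵥ u i := fun x => by
        rw [dotProduct_add]; ring
      have h2 : u i ⬝ᵥ u i = 1 := by simpa using horth i i
      simp only [add_sub_cancel_left, h1, h2, div_one]
      rw [hspec (u i)]
      rw [Finset.sum_eq_single i]
      · rw [h2]; ring
      · intro j _ hji
        have : u j ⬝ᵥ u i = 0 := by simpa [hji] using horth j i
        rw [this]; ring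
      · simp
  · -- lower bound
    rintro t ⟨θ, hne, hoθ, rfl⟩
    set v : Fin p → Fin p → ℝ := fun i => θ i - θ0 with hv
    set c : Fin p → Fin p → ℝ := fun i j => u j ⬝ᵥ v i with hc
    set n : Fin p → ℝ := fun i => v i ⬝ᵥ v i with hn
    have hnpos : ∀ i, 0 < n i := by
      intro i
      have hnz : v i ≠ 0 := hne i
      have h0 : 0 ≤ n i := Finset.sum_nonneg fun a _ => mul_self_nonneg _
      rcases lt_or_eq_of_le h0 with h | h
      · exact h
      · exact absurd (dotProduct_self_eq_zero.mp h.symm) hnz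
    -- numerator rewrite
    have hnum : ∀ i, ∑ x, ((f x ⬝ᵥ θ i) - (f x ⬝ᵥ θ0)) ^ 2 * ξ x = ∑ j, lam j * (c i j) ^ 2 := by
      intro i
      have : ∀ x : X, (f x ⬝ᵥ θ i) - (f x ⬝ᵥ θ0) = f x ⬝ᵥ v i := fun x => by
        simp only [hv]; rw [dotProduct_sub]
      simp only [this]
      exact hspec (v i)
    -- Bessel/Parseval facts
    have hrow : ∀ i, ∑ j, (c i j) ^ 2 = n i := by
      intro i
      have h1 : n i = v i ⬝ᵥ v i := rfl
      rw [h1, parseval u horth (v i) (v i)]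
      exact Finset.sum_congr rfl fun j _ => by
        show (u j ⬝ᵥ v i) ^ 2 = (u j ⬝ᵥ v i) * (u j ⬝ᵥ v i); ring
    have hbessel : ∀ j, ∑ i, (c i j) ^ 2 / n i = 1 := by
      intro j
      set e : Fin p → Fin p → ℝ := fun i => (Real.sqrt (n i))⁻¹ • v i with he
      have hsq : ∀ i, Real.sqrt (n i) * Real.sqrt (n i) = n i := fun i =>
        Real.mul_self_sqrt (hnpos i).le
      have hsqne : ∀ i, Real.sqrt (n i) ≠ 0 := fun i =>
        ne_of_gt (Real.sqrt_pos.mpr (hnpos i))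
      have heo : ∀ a b, e a ⬝ᵥ e b = if a = b then (1:ℝ) else 0 := by
        intro a b
        simp only [he, smul_dotProduct, dotProduct_smul, smul_eq_mul]
        by_cases hab : a = b
        · subst hab
          rw [if_pos rfl]
          have hvv : v a ⬝ᵥ v a = n a := rfl
          rw [hvv]
          field_simp
          rw [div_eq_one_iff_eq (pow_ne_zero 2 (hsqne a)), sq, hsq a]
        · rw [if_neg hab, hoθ a b hab]; ring
      have hp2 := parseval e heo (u j) (u j)
      have hujuj : u j ⬝ᵥ u j = 1 := by simpa using horth j j
      rw [hujuj] at hp2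
      calc ∑ i, (c i j) ^ 2 / n i = ∑ i, (e i ⬝ᵥ u j) * (e i ⬝ᵥ u j) := by
            refine Finset.sum_congr rfl fun i _ => ?_
            simp only [he, smul_dotProduct, smul_eq_mul]
            have hvc : v i ⬝ᵥ u j = c i j := dotProduct_comm _ _
            rw [hvc, div_eq_mul_inv]
            rw [show ((Real.sqrt (n i))⁻¹ * c i j) * ((Real.sqrt (n i))⁻¹ * c i j)
                = (c i j) ^ 2 * (Real.sqrt (n i) * Real.sqrt (n i))⁻¹ by
              rw [mul_inv]; ring]
            rw [hsq i]
        _ = 1 := hp2.symm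
    -- weights
    set W : Fin p → ℝ := fun j => ∑ i ∈ S, (c i j) ^ 2 / n i with hW
    have hW0 : ∀ j, 0 ≤ W j := fun j =>
      Finset.sum_nonneg fun i _ => div_nonneg (sq_nonneg _) (hnpos i).le
    have hW1 : ∀ j, W j ≤ 1 := by
      intro j
      have h1 : W j = ∑ i ∈ S, (c i j) ^ 2 / n i := rfl
      rw [h1, ← hbessel j]
      exact Finset.sum_le_sum_of_subset_of_nonneg (Finset.subset_univ S)
        (fun i _ _ => div_nonneg (sq_nonneg _) (hnpos i).le)
    have hWsum : ∑ j, W j = (k : ℝ) := by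
      have h1 : ∀ j, W j = ∑ i ∈ S, (c i j) ^ 2 / n i := fun _ => rfl
      simp only [h1]
      rw [Finset.sum_comm]
      have : ∀ i, ∑ j, (c i j) ^ 2 / n i = 1 := by
        intro i
        rw [← Finset.sum_div, hrow i, div_self (hnpos i).ne']
      rw [Finset.sum_congr rfl fun i _ => this i]
      rw [Finset.sum_const, hS, hcard_aux p k hk, nsmul_eq_mul, mul_one]
    -- rewrite the target sum
    have htarget : ∑ i ∈ S, (∑ x, ((f x ⬝ᵥ θ i) - (f x ⬝ᵥ θ0)) ^ 2 * ξ x) / (v i ⬝ᵥ v i)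
        = ∑ j, lam j * W j := by
      calc ∑ i ∈ S, (∑ x, ((f x ⬝ᵥ θ i) - (f x ⬝ᵥ θ0)) ^ 2 * ξ x) / (v i ⬝ᵥ v i)
          = ∑ i ∈ S, ∑ j, lam j * (c i j) ^ 2 / n i := by
            refine Finset.sum_congr rfl fun i _ => ?_
            rw [hnum i, ← Finset.sum_div]
        _ = ∑ j, ∑ i ∈ S, lam j * (c i j) ^ 2 / n i := Finset.sum_comm
        _ = ∑ j, lam j * W j := by
            refine Finset.sum_congr rfl fun j _ => ?_
            have h1 : W j = ∑ i ∈ S, (c i j) ^ 2 / n i := rfl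
            rw [h1, Finset.mul_sum]
            exact Finset.sum_congr rfl fun i _ => by rw [mul_div_assoc]
    rw [htarget]
    -- handle k = 0
    rcases Nat.eq_zero_or_pos k with hk0 | hk0
    · have hSe : S = ∅ := by
        rw [hS, hk0]
        simp
      have hWz : ∀ j, W j = 0 := fun j => by
        have h1 : W j = ∑ i ∈ S, (c i j) ^ 2 / n i := rfl
        rw [h1, hSe, Finset.sum_empty]
      rw [hSe, Finset.sum_empty]
      rw [Finset.sum_congr rfl fun j _ => by rw [hWz j, mul_zero]]
      simp
    · -- k > 0 : threshold argument
      set km : Fin p := ⟨k - 1, by omega⟩ with hkm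
      set ind : Fin p → ℝ := fun j => if (j : ℕ) < k then (1:ℝ) else 0 with hindd
      have hind : ∑ j ∈ S, lam j = ∑ j, ind j * lam j := by
        rw [hS, Finset.sum_filter]
        refine Finset.sum_congr rfl fun j _ => ?_
        by_cases h : (j : ℕ) < k <;> simp [ind, h]
      have key : 0 ≤ ∑ j, (W j - ind j) * (lam j - lam km) := by
        refine Finset.sum_nonneg fun j _ => ?_
        by_cases hjk : (j : ℕ) < k
        · have h1 : lam j ≤ lam km := hmono (Fin.le_def.mpr (by simp [hkm]; omega))
          have h2 : W j ≤ 1 := hW1 j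
          have h3 : ind j = 1 := by simp [ind, hjk]
          rw [h3]
          nlinarith
        · have h1 : lam km ≤ lam j := hmono (Fin.le_def.mpr (by simp [hkm]; omega))
          have h3 : ind j = 0 := by simp [ind, hjk]
          rw [h3]
          have := hW0 j
          nlinarith
      have hindsum : ∑ j, ind j = (k : ℝ) := by
        have h1 : ∀ j : Fin p, ind j = if (j : ℕ) < k then (1:ℝ) else 0 := fun _ => rfl
        simp only [h1, Finset.sum_boole]
        rw [← hS]
        norm_cast
        exact hcard_aux p k hk
      calc ∑ j ∈ S, lam j = ∑ j, ind j * lam j := hind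
        _ ≤ (∑ j, ind j * lam j) + ∑ j, (W j - ind j) * (lam j - lam km) :=
            le_add_of_nonneg_right key
        _ = ∑ j, (ind j * lam j + (W j - ind j) * (lam j - lam km)) :=
            Finset.sum_add_distrib.symm
        _ = ∑ j, (lam j * W j - lam km * W j + lam km * ind j) :=
            Finset.sum_congr rfl fun j _ => by ring
        _ = (∑ j, lam j * W j) - lam km * ∑ j, W j + lam km * ∑ j, ind j := by
            rw [Finset.sum_add_distrib, Finset.sum_sub_distrib, Finset.mul_sum, Finset.mul_sum]
        _ = ∑ j, lam j * W j := by rw [hWsum, hindsum]; ring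
end
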